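/- arXiv:2106.13994 — 3 statements merged into one kernel-verified Lean document; each statement's English description precedes it below -/
import Mathlib

section
/- Let Q : [0,∞) → ℝ be a bounded, nonnegative, measurable function and let λ ∈ (0,1). Suppose that Q(t) ≤ (λ/t) ∫₀ᵗ Q(t') dt' + ε(t) for all t > 0, where ε(t) → 0 as t → +∞. Then limsup_{t→+∞} Q(t) = 0. -/
open MeasureTheory Set Filter Topology

/-! If `Q ≤ c` eventually, then the Cesàro means `t⁻¹ ∫₀ᵗ Q` are eventually at most `c + δ`,
so the recursive inequality gives `Q ≤ λ c + δ` eventually. Starting from the bound `M` and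
iterating, `Q ≤ λⁿ M + δ` eventually for every `n` and `δ > 0`, and `λⁿ M → 0`. -/

theorem eventually_inv_mul_integral_le_of_eventually_le {f : ℝ → ℝ}
    (hf : ∀ a b, IntervalIntegrable f volume a b) {c δ : ℝ} (hc : ∀ᶠ t in atTop, f t ≤ c)
    (hδ : 0 < δ) : ∀ᶠ t in atTop, t⁻¹ * ∫ s in Ioc 0 t, f s ≤ c + δ := by
  obtain ⟨T, hT⟩ := eventually_atTop.1 hc
  have hrem : Tendsto (fun t : ℝ => t⁻¹ * ((∫ s in (0)..T, f s) - c * T)) atTop (𝓝 0) := by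
    simpa using tendsto_inv_atTop_zero.mul_const ((∫ s in (0)..T, f s) - c * T)
  filter_upwards [hrem.eventually (gt_mem_nhds hδ), eventually_gt_atTop 0,
    eventually_ge_atTop T] with t hsmall ht0 htT
  have htail : ∫ s in T..t, f s ≤ ∫ _ in T..t, c :=
    intervalIntegral.integral_mono_on htT (hf T t) intervalIntegrable_const
      fun s hs => hT s hs.1
  rw [intervalIntegral.integral_const, smul_eq_mul] at htail
  calc t⁻¹ * ∫ s in Ioc 0 t, f s
      = t⁻¹ * ((∫ s in (0)..T, f s) + ∫ s in T..t, f s) := by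
        rw [intervalIntegral.integral_add_adjacent_intervals (hf 0 T) (hf T t),
          intervalIntegral.integral_of_le ht0.le]
    _ ≤ t⁻¹ * ((∫ s in (0)..T, f s) + (t - T) * c) := by gcongr
    _ = c + t⁻¹ * ((∫ s in (0)..T, f s) - c * T) := by field_simp; ring
    _ ≤ c + δ := by linarith

theorem eventually_le_mul_add_of_eventually_le {Q ε : ℝ → ℝ} {lam c δ : ℝ}
    (hlam0 : 0 ≤ lam) (hlam1 : lam ≤ 1) (hQ : ∀ a b, IntervalIntegrable Q volume a b)
    (hrec : ∀ t, 0 < t → Q t ≤ (lam / t) * (∫ t' in Ioc (0:ℝ) t, Q t') + ε t)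
    (hε : Tendsto ε atTop (𝓝 0)) (hc : ∀ᶠ t in atTop, Q t ≤ c) (hδ : 0 < δ) :
    ∀ᶠ t in atTop, Q t ≤ lam * c + δ := by
  filter_upwards [eventually_inv_mul_integral_le_of_eventually_le hQ hc (half_pos hδ),
    hε.eventually (gt_mem_nhds (half_pos hδ)), eventually_gt_atTop 0] with t hmean hεt ht0
  have hlamδ : lam * (δ / 2) ≤ δ / 2 := mul_le_of_le_one_left (half_pos hδ).le hlam1
  calc Q t ≤ lam * (t⁻¹ * ∫ s in Ioc 0 t, Q s) + ε t := by
        simpa only [div_eq_mul_inv, mul_assoc] using hrec t ht0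
    _ ≤ lam * (c + δ / 2) + ε t := by gcongr
    _ ≤ lam * c + δ := by linarith

theorem tendsto_zero_of_eventually_le_mul_add {α : Type*} {l : Filter α} {f : α → ℝ}
    {lam M : ℝ} (hlam0 : 0 ≤ lam) (hlam1 : lam < 1) (hf0 : ∀ᶠ x in l, 0 ≤ f x)
    (hM : ∀ᶠ x in l, f x ≤ M)
    (hstep : ∀ c, (∀ᶠ x in l, f x ≤ c) → ∀ δ > 0, ∀ᶠ x in l, f x ≤ lam * c + δ) :
    Tendsto f l (𝓝 0) := by
  have hiter : ∀ n : ℕ, ∀ δ > 0, ∀ᶠ x in l, f x ≤ lam ^ n * M + δ := by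
    intro n
    induction n with
    | zero => exact fun δ hδ => hM.mono fun x hx => by simp only [pow_zero, one_mul]; linarith
    | succ n ih =>
      intro δ hδ
      have hlamδ : lam * (δ / 2) ≤ δ / 2 := mul_le_of_le_one_left (half_pos hδ).le hlam1.le
      filter_upwards [hstep _ (ih _ (half_pos hδ)) _ (half_pos hδ)] with x hx
      rw [pow_succ']
      linarith
  have hpow : Tendsto (fun n : ℕ => lam ^ n * M) atTop (𝓝 0) := by
    simpa using (tendsto_pow_atTop_nhds_zero_of_lt_one hlam0 hlam1).mul_const M
  refine tendsto_order.2 ⟨fun a ha => hf0.mono fun x hx => ha.trans_le hx, fun b hb => ?_⟩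
  obtain ⟨n, hn⟩ := (hpow.eventually (gt_mem_nhds (half_pos hb))).exists
  filter_upwards [hiter n _ (half_pos hb)] with x hx
  linarith

/-- If a bounded, nonnegative, measurable `Q` satisfies
`Q t ≤ (λ/t) ∫₀ᵗ Q + ε t` with `ε → 0` and `λ ∈ (0,1)`, then `Q → 0` at infinity. -/
theorem stmt0 (Q ε : ℝ → ℝ) (M lam : ℝ)
    (hlam0 : 0 < lam) (hlam1 : lam < 1)
    (hQmeas : Measurable Q) (hQ0 : ∀ t, 0 ≤ Q t) (hQM : ∀ t, Q t ≤ M)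
    (hrec : ∀ t, 0 < t → Q t ≤ (lam / t) * (∫ t' in Ioc (0:ℝ) t, Q t') + ε t)
    (hε : Tendsto ε atTop (𝓝 0)) :
    Tendsto Q atTop (𝓝 0) := by
  have hQ : ∀ a b, IntervalIntegrable Q volume a b := fun a b =>
    intervalIntegrable_const.mono_fun' hQmeas.aestronglyMeasurable.restrict
      (ae_of_all _ fun t => (Real.norm_of_nonneg (hQ0 t)).trans_le (hQM t))
  exact tendsto_zero_of_eventually_le_mul_add hlam0.le hlam1 (.of_forall hQ0) (.of_forall hQM)
    fun _ hc _ hδ => eventually_le_mul_add_of_eventually_le hlam0.le hlam1.le hQ hrec hε hc hδ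
end

section
/- Let Q : [0,∞) → ℝ be bounded, nonnegative and measurable, let λ ∈ (0,1) and κ ∈ (0, 1-λ), i.e. λ/(1-κ) < 1. Suppose Q(t) ≤ (λ/t)∫₀ᵗ Q(t') dt' + A(t) for all t > 0, where A is nonincreasing and ∫₁^∞ t^{κ-1} A(t) dt < ∞. Then ∫₀^∞ t^{κ-1} Q(t) dt < +∞. -/
/-! On `(0, 1]` the weight `t ^ (κ - 1)` is integrable and `Q` is bounded. On `(1, T]`, multiply
the inequality by `t ^ (κ - 1)` and integrate: by Tonelli,
`∫₁ᵀ t ^ (κ - 2) ∫₀ᵗ Q ≤ (1 - κ)⁻¹ ∫₀ᵀ max 1 s ^ (κ - 1) Q s ds`, so the truncated integral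
`I T = ∫₁ᵀ t ^ (κ - 1) Q` satisfies `I T ≤ λ / (1 - κ) * (M + I T) + ∫₁^∞ t ^ (κ - 1) A`.
As `I T` is finite and `λ / (1 - κ) < 1`, this bounds `I T` uniformly in `T`. -/

open MeasureTheory Set Filter Topology
open scoped ENNReal

theorem ENNReal.le_div_one_sub_of_le_mul_add {x b c : ℝ≥0∞} (hx : x ≠ ∞) (hc : c < 1)
    (h : x ≤ c * x + b) : x ≤ b / (1 - c) := by
  rw [ENNReal.le_div_iff_mul_le (Or.inl (tsub_pos_of_lt hc).ne') (Or.inl (by simp)),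
    ENNReal.mul_sub (fun _ _ => hx), mul_one, tsub_le_iff_left]
  rwa [mul_comm]

theorem lintegral_Ioi_rpow_of_lt {p b : ℝ} (hp : p < -1) (hb : 0 < b) :
    ∫⁻ t in Ioi b, ENNReal.ofReal (t ^ p) = ENNReal.ofReal (-b ^ (p + 1) / (p + 1)) := by
  rw [← integral_Ioi_rpow_of_lt hp hb, ofReal_integral_eq_lintegral_ofReal
    (integrableOn_Ioi_rpow_of_lt hp hb)]
  filter_upwards [ae_restrict_mem measurableSet_Ioi] with t ht
  exact Real.rpow_nonneg (hb.trans ht).le _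

theorem lintegral_Ioc_rpow_mul_lintegral_Ioc_le {f : ℝ → ℝ≥0∞} (hf : Measurable f) {κ a : ℝ}
    (hκ : κ < 1) (ha : 0 < a) (T : ℝ) :
    ∫⁻ t in Ioc a T, ENNReal.ofReal (t ^ (κ - 2)) * ∫⁻ s in Ioc 0 t, f s ≤
      ENNReal.ofReal (1 - κ)⁻¹ * ∫⁻ s in Ioc 0 T, ENNReal.ofReal (max a s ^ (κ - 1)) * f s := by
  set k : ℝ → ℝ → ℝ≥0∞ := fun t s =>
    {p : ℝ × ℝ | p.2 ≤ p.1}.indicator (fun p => ENNReal.ofReal (p.1 ^ (κ - 2)) * f p.2) (t, s)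
  have hk : Measurable (Function.uncurry k) :=
    (by fun_prop : Measurable fun p : ℝ × ℝ => ENNReal.ofReal (p.1 ^ (κ - 2)) * f p.2).indicator
      (measurableSet_le measurable_snd measurable_fst)
  have inner_s : ∀ t ∈ Ioc a T,
      ∫⁻ s in Ioc 0 T, k t s = ENNReal.ofReal (t ^ (κ - 2)) * ∫⁻ s in Ioc 0 t, f s := by
    intro t ht
    have : (fun s => k t s) = (Iic t).indicator fun s => ENNReal.ofReal (t ^ (κ - 2)) * f s := by
      ext s; simp [k, indicator_apply]
    rw [this, lintegral_indicator measurableSet_Iic, Measure.restrict_restrict measurableSet_Iic,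
      Iic_inter_Ioc_of_le ht.2, lintegral_const_mul _ hf]
  have inner_t : ∀ s,
      ∫⁻ t in Ioc a T, k t s ≤
        ENNReal.ofReal (1 - κ)⁻¹ * (ENNReal.ofReal (max a s ^ (κ - 1)) * f s) := by
    intro s
    have : (fun t => k t s) = (Ici s).indicator fun t => ENNReal.ofReal (t ^ (κ - 2)) * f s := by
      ext t; simp [k, indicator_apply]
    rw [this, lintegral_indicator measurableSet_Ici, Measure.restrict_restrict measurableSet_Ici]
    calc ∫⁻ t in Ici s ∩ Ioc a T, ENNReal.ofReal (t ^ (κ - 2)) * f s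
        ≤ ∫⁻ t in Ioi (max a s), ENNReal.ofReal (t ^ (κ - 2)) * f s := by
          rw [setLIntegral_congr Ioi_ae_eq_Ici]
          exact lintegral_mono_set fun t ht => max_le ht.2.1.le ht.1
      _ = _ := by
          rw [lintegral_mul_const _ (by fun_prop),
            lintegral_Ioi_rpow_of_lt (by linarith) (lt_max_of_lt_left ha), ← mul_assoc,
            ← ENNReal.ofReal_mul (inv_nonneg.2 (by linarith))]
          congr 2
          rw [show κ - 2 + 1 = κ - 1 by ring, neg_div, ← div_neg, neg_sub, div_eq_inv_mul]
  calc ∫⁻ t in Ioc a T, ENNReal.ofReal (t ^ (κ - 2)) * ∫⁻ s in Ioc 0 t, f s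
      = ∫⁻ t in Ioc a T, ∫⁻ s in Ioc 0 T, k t s :=
        (setLIntegral_congr_fun measurableSet_Ioc inner_s).symm
    _ = ∫⁻ s in Ioc 0 T, ∫⁻ t in Ioc a T, k t s := lintegral_lintegral_swap hk.aemeasurable
    _ ≤ ∫⁻ s in Ioc 0 T, ENNReal.ofReal (1 - κ)⁻¹ * (ENNReal.ofReal (max a s ^ (κ - 1)) * f s) :=
        lintegral_mono inner_t
    _ = _ := lintegral_const_mul _ (by fun_prop)

theorem ofReal_rpow_mul_le_of_le_div_mul_integral {Q A : ℝ → ℝ} {lam κ t : ℝ} (hlam : 0 ≤ lam)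
    (ht : 0 < t) (hQint : IntegrableOn Q (Ioc 0 t)) (hQ0 : ∀ s, 0 ≤ Q s)
    (hrec : Q t ≤ lam / t * (∫ s in Ioc 0 t, Q s) + A t) :
    ENNReal.ofReal (t ^ (κ - 1) * Q t) ≤
      ENNReal.ofReal lam * (ENNReal.ofReal (t ^ (κ - 2)) * ∫⁻ s in Ioc 0 t, ENNReal.ofReal (Q s)) +
        ENNReal.ofReal (t ^ (κ - 1) * A t) := by
  have key : t ^ (κ - 1) * Q t ≤
      lam * (t ^ (κ - 2) * ∫ s in Ioc 0 t, Q s) + t ^ (κ - 1) * A t := by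
    have hpow : t ^ (κ - 1) = t ^ (κ - 2) * t := by
      rw [← Real.rpow_add_one ht.ne']; ring_nf
    calc t ^ (κ - 1) * Q t ≤ t ^ (κ - 1) * (lam / t * (∫ s in Ioc 0 t, Q s) + A t) :=
          mul_le_mul_of_nonneg_left hrec (by positivity)
      _ = _ := by rw [hpow]; field_simp
  rw [← ofReal_integral_eq_lintegral_ofReal hQint (ae_of_all _ hQ0),
    ← ENNReal.ofReal_mul (by positivity), ← ENNReal.ofReal_mul hlam]
  exact (ENNReal.ofReal_le_ofReal key).trans ENNReal.ofReal_add_le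

theorem lintegral_Ioc_max_one_rpow_mul_le {Q : ℝ → ℝ} {M κ : ℝ} (hQM : ∀ t, Q t ≤ M) (T : ℝ) :
    ∫⁻ s in Ioc 0 T, ENNReal.ofReal (max 1 s ^ (κ - 1)) * ENNReal.ofReal (Q s) ≤
      ENNReal.ofReal M + ∫⁻ s in Ioc 1 T, ENNReal.ofReal (s ^ (κ - 1) * Q s) := by
  calc _ ≤ ∫⁻ s in Ioc 0 1 ∪ Ioc 1 T, ENNReal.ofReal (max 1 s ^ (κ - 1)) * ENNReal.ofReal (Q s) :=
        lintegral_mono_set fun s hs => by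
          rcases le_or_gt s 1 with h | h
          exacts [Or.inl ⟨hs.1, h⟩, Or.inr ⟨h, hs.2⟩]
    _ ≤ _ := lintegral_union_le _ _ _
    _ ≤ _ := by
      refine add_le_add ?_ ?_
      · calc _ ≤ ∫⁻ s in Ioc (0 : ℝ) 1, ENNReal.ofReal M := by
              refine setLIntegral_mono' measurableSet_Ioc fun s hs => ?_
              rw [max_eq_left hs.2, Real.one_rpow, ENNReal.ofReal_one, one_mul]
              exact ENNReal.ofReal_le_ofReal (hQM s)
          _ = ENNReal.ofReal M := by simp
      · refine (setLIntegral_congr_fun measurableSet_Ioc fun s hs => ?_).le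
        rw [max_eq_right hs.1.le,
          ← ENNReal.ofReal_mul (Real.rpow_nonneg (zero_le_one.trans hs.1.le) _)]

theorem lintegral_Ioi_le_of_forall_lintegral_Ioc_le {f : ℝ → ℝ≥0∞} {a : ℝ} {B : ℝ≥0∞}
    (h : ∀ T, ∫⁻ t in Ioc a T, f t ≤ B) : ∫⁻ t in Ioi a, f t ≤ B := by
  have hmono : Monotone fun n : ℕ => Ioc a (n : ℝ) := fun m n hmn =>
    Ioc_subset_Ioc_right (Nat.cast_le.2 hmn)
  rw [← iUnion_Ioc_eq_Ioi_self_iff.2 fun x _ => exists_nat_ge x,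
    setLIntegral_iUnion_of_directed _ hmono.directed_le]
  exact iSup_le fun n => h n

theorem lintegral_Ioc_one_rpow_mul_ne_top {Q : ℝ → ℝ} {M κ : ℝ} (hκ : κ ≤ 1)
    (hQ0 : ∀ t, 0 ≤ Q t) (hQM : ∀ t, Q t ≤ M) (T : ℝ) :
    ∫⁻ t in Ioc 1 T, ENNReal.ofReal (t ^ (κ - 1) * Q t) ≠ ∞ := by
  refine (setLIntegral_lt_top_of_le_nnreal measure_Ioc_lt_top.ne ⟨M.toNNReal, fun t ht => ?_⟩).ne
  refine ENNReal.ofReal_le_ofReal ((mul_le_of_le_one_left (hQ0 t) ?_).trans (hQM t))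
  exact Real.rpow_le_one_of_one_le_of_nonpos ht.1.le (by linarith)

theorem lintegral_Ioc_one_rpow_mul_le_of_le_div_mul_integral {Q A : ℝ → ℝ} {M lam κ : ℝ}
    (hlam : 0 ≤ lam) (hκ : κ < 1) (hQmeas : Measurable Q) (hQ0 : ∀ t, 0 ≤ Q t)
    (hQM : ∀ t, Q t ≤ M)
    (hrec : ∀ t, 0 < t → Q t ≤ lam / t * (∫ s in Ioc 0 t, Q s) + A t) (T : ℝ) :
    ∫⁻ t in Ioc 1 T, ENNReal.ofReal (t ^ (κ - 1) * Q t) ≤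
      ENNReal.ofReal (lam / (1 - κ)) * (∫⁻ t in Ioc 1 T, ENNReal.ofReal (t ^ (κ - 1) * Q t)) +
        (ENNReal.ofReal (lam / (1 - κ)) * ENNReal.ofReal M +
          ∫⁻ t in Ioi 1, ENNReal.ofReal (t ^ (κ - 1) * A t)) := by
  have hQnorm : ∀ t, ‖Q t‖ ≤ M := fun t => (Real.norm_of_nonneg (hQ0 t)).trans_le (hQM t)
  have hprimitive : Measurable fun t => ∫⁻ s in Ioc 0 t, ENNReal.ofReal (Q s) :=
    Monotone.measurable fun _ _ h => lintegral_mono_set (Ioc_subset_Ioc_right h)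
  calc ∫⁻ t in Ioc 1 T, ENNReal.ofReal (t ^ (κ - 1) * Q t)
      ≤ ∫⁻ t in Ioc 1 T, (ENNReal.ofReal lam * (ENNReal.ofReal (t ^ (κ - 2)) *
          ∫⁻ s in Ioc 0 t, ENNReal.ofReal (Q s)) + ENNReal.ofReal (t ^ (κ - 1) * A t)) :=
        setLIntegral_mono' measurableSet_Ioc fun t ht =>
          have ht0 : 0 < t := zero_lt_one.trans ht.1
          ofReal_rpow_mul_le_of_le_div_mul_integral hlam ht0
            (.of_bound measure_Ioc_lt_top hQmeas.aestronglyMeasurable M (ae_of_all _ hQnorm))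
            hQ0 (hrec t ht0)
    _ = ENNReal.ofReal lam * (∫⁻ t in Ioc 1 T, ENNReal.ofReal (t ^ (κ - 2)) *
          ∫⁻ s in Ioc 0 t, ENNReal.ofReal (Q s)) +
        ∫⁻ t in Ioc 1 T, ENNReal.ofReal (t ^ (κ - 1) * A t) := by
      rw [lintegral_add_left (by fun_prop), lintegral_const_mul _ (by fun_prop)]
    _ ≤ ENNReal.ofReal lam * (ENNReal.ofReal (1 - κ)⁻¹ * ∫⁻ s in Ioc 0 T,
          ENNReal.ofReal (max 1 s ^ (κ - 1)) * ENNReal.ofReal (Q s)) +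
        ∫⁻ t in Ioi 1, ENNReal.ofReal (t ^ (κ - 1) * A t) :=
      add_le_add
        (mul_le_mul_right (lintegral_Ioc_rpow_mul_lintegral_Ioc_le hQmeas.ennreal_ofReal hκ
          zero_lt_one T) _)
        (lintegral_mono_set Ioc_subset_Ioi_self)
    _ ≤ ENNReal.ofReal lam * (ENNReal.ofReal (1 - κ)⁻¹ * (ENNReal.ofReal M +
          ∫⁻ t in Ioc 1 T, ENNReal.ofReal (t ^ (κ - 1) * Q t))) +
        ∫⁻ t in Ioi 1, ENNReal.ofReal (t ^ (κ - 1) * A t) := by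
      gcongr
      exact lintegral_Ioc_max_one_rpow_mul_le hQM T
    _ = _ := by
      rw [div_eq_mul_inv, ENNReal.ofReal_mul hlam]
      ring

theorem lintegral_Ioi_one_rpow_mul_ne_top_of_le_div_mul_integral {Q A : ℝ → ℝ} {M lam κ : ℝ}
    (hlam : 0 ≤ lam) (hκ : κ < 1 - lam) (hQmeas : Measurable Q) (hQ0 : ∀ t, 0 ≤ Q t)
    (hQM : ∀ t, Q t ≤ M) (hA : ∫⁻ t in Ioi 1, ENNReal.ofReal (t ^ (κ - 1) * A t) ≠ ∞)
    (hrec : ∀ t, 0 < t → Q t ≤ lam / t * (∫ s in Ioc 0 t, Q s) + A t) :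
    ∫⁻ t in Ioi 1, ENNReal.ofReal (t ^ (κ - 1) * Q t) ≠ ∞ := by
  have hc : ENNReal.ofReal (lam / (1 - κ)) < 1 := by
    rw [ENNReal.ofReal_lt_one, div_lt_one (by linarith)]
    linarith
  have hbound : ∀ T, ∫⁻ t in Ioc 1 T, ENNReal.ofReal (t ^ (κ - 1) * Q t) ≤
      (ENNReal.ofReal (lam / (1 - κ)) * ENNReal.ofReal M +
        ∫⁻ t in Ioi 1, ENNReal.ofReal (t ^ (κ - 1) * A t)) /
          (1 - ENNReal.ofReal (lam / (1 - κ))) := fun T =>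
    ENNReal.le_div_one_sub_of_le_mul_add
      (lintegral_Ioc_one_rpow_mul_ne_top (by linarith) hQ0 hQM T) hc
      (lintegral_Ioc_one_rpow_mul_le_of_le_div_mul_integral hlam (by linarith) hQmeas hQ0 hQM
        hrec T)
  refine ne_top_of_le_ne_top ?_ (lintegral_Ioi_le_of_forall_lintegral_Ioc_le hbound)
  exact ENNReal.div_ne_top (by finiteness) (tsub_pos_of_lt hc).ne'

theorem stmt1_general (Q A : ℝ → ℝ) (M lam κ : ℝ)
    (hlam0 : 0 < lam) (hκ0 : 0 < κ) (hκ : κ < 1 - lam)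
    (hQmeas : Measurable Q) (hQ0 : ∀ t, 0 ≤ Q t) (hQM : ∀ t, Q t ≤ M)
    (hAint : IntegrableOn (fun t => t ^ (κ - 1) * A t) (Ioi (1:ℝ)))
    (hrec : ∀ t, 0 < t → Q t ≤ (lam / t) * (∫ t' in Ioc (0:ℝ) t, Q t') + A t) :
    IntegrableOn (fun t => t ^ (κ - 1) * Q t) (Ioi (0:ℝ)) := by
  have hnear : IntegrableOn (fun t => t ^ (κ - 1) * Q t) (Ioc 0 1) :=
    (intervalIntegral.intervalIntegrable_rpow' (by linarith)).1.mul_bdd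
      hQmeas.aestronglyMeasurable
      (ae_of_all _ fun t => (Real.norm_of_nonneg (hQ0 t)).trans_le (hQM t))
  have hfar : IntegrableOn (fun t => t ^ (κ - 1) * Q t) (Ioi 1) := by
    refine (lintegral_ofReal_ne_top_iff_integrable (by fun_prop) ?_).1
      (lintegral_Ioi_one_rpow_mul_ne_top_of_le_div_mul_integral hlam0.le hκ hQmeas hQ0 hQM
        hAint.lintegral_lt_top.ne hrec)
    filter_upwards [ae_restrict_mem measurableSet_Ioi] with t ht
    exact mul_nonneg (Real.rpow_nonneg (zero_le_one.trans ht.le) _) (hQ0 t)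
  simpa [Ioc_union_Ioi_eq_Ioi zero_le_one] using hnear.union hfar

/-- If a bounded, nonnegative, measurable `Q` satisfies
`Q t ≤ (λ/t) ∫₀ᵗ Q + A t` with `A` nonincreasing, `∫₁^∞ t^{κ-1} A t dt < ∞`,
`λ ∈ (0,1)` and `0 < κ < 1 - λ`, then `∫₀^∞ t^{κ-1} Q t dt < ∞`. -/
theorem stmt1 (Q A : ℝ → ℝ) (M lam κ : ℝ)
    (hlam0 : 0 < lam) (hlam1 : lam < 1) (hκ0 : 0 < κ) (hκ : κ < 1 - lam)
    (hQmeas : Measurable Q) (hQ0 : ∀ t, 0 ≤ Q t) (hQM : ∀ t, Q t ≤ M)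
    (hA0 : ∀ t, 0 < t → 0 ≤ A t) (hAmono : AntitoneOn A (Ioi (0:ℝ)))
    (hAint : IntegrableOn (fun t => t ^ (κ - 1) * A t) (Ioi (1:ℝ)))
    (hrec : ∀ t, 0 < t → Q t ≤ (lam / t) * (∫ t' in Ioc (0:ℝ) t, Q t') + A t) :
    IntegrableOn (fun t => t ^ (κ - 1) * Q t) (Ioi (0:ℝ)) :=
  stmt1_general Q A M lam κ hlam0 hκ0 hκ hQmeas hQ0 hQM hAint hrec
end

section
/- Let d ≥ 3, 1 + 2/(d−1) < p, η ∈ ℝ, t₁ > η. Let h : (η,∞) → [0,∞) be measurable with ∫_η^∞ (t−η)^{d−1} h(t)^{p+1} dt ≤ E. Then for all t₂ > t₁, ∫_{t₁}^{t₂} (t−η)^{(d−1)/2} h(t)^p dt ≤ C(d,p) · E^{p/(p+1)} · (t₁−η)^{−β/2}, where β = ((d−1)(p−1)−2)/(p+1) > 0. -/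
/-!
Split the integrand as `[(t-η)^{(d-1)p/(p+1)} h^p] · (t-η)^{-(d-1)(p-1)/(2(p+1))}` and apply
Hölder with exponents `(p+1)/p` and `p+1`. The first factor contributes `E^{p/(p+1)}`; the
`(p+1)`-th power of the second is `(t-η)^{-(d-1)(p-1)/2}`, whose exponent is `< -1` exactly when
`p > 1 + 2/(d-1)`, so its integral over `(t₁, t₂]` is bounded independently of `t₂` by a multiple
of `(t₁-η)^{1-(d-1)(p-1)/2} = (t₁-η)^{-β(p+1)/2}`.
-/

open MeasureTheory Set Filter Topology

lemma memLp_ofReal_of_integrable_rpow {α : Type*} [MeasurableSpace α] {μ : Measure α}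
    {f : α → ℝ} {p : ℝ} (hf : AEStronglyMeasurable f μ) (hf₀ : 0 ≤ᵐ[μ] f) (hp : 0 < p)
    (hint : Integrable (fun x => f x ^ p) μ) : MemLp f (ENNReal.ofReal p) μ := by
  rw [← integrable_norm_rpow_iff hf (by simpa using hp) ENNReal.ofReal_ne_top,
    ENNReal.toReal_ofReal hp.le]
  refine hint.congr ?_
  filter_upwards [hf₀] with x hx
  rw [Real.norm_of_nonneg hx]

lemma integral_mul_le_of_integrable_rpow {α : Type*} [MeasurableSpace α] {μ : Measure α}
    {r q : ℝ} (hrq : r.HolderConjugate q) {f g : α → ℝ}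
    (hf : AEStronglyMeasurable f μ) (hg : AEStronglyMeasurable g μ)
    (hf₀ : 0 ≤ᵐ[μ] f) (hg₀ : 0 ≤ᵐ[μ] g)
    (hfr : Integrable (fun x => f x ^ r) μ) (hgq : Integrable (fun x => g x ^ q) μ) :
    ∫ x, f x * g x ∂μ ≤ (∫ x, f x ^ r ∂μ) ^ (1 / r) * (∫ x, g x ^ q ∂μ) ^ (1 / q) :=
  integral_mul_le_Lp_mul_Lq_of_nonneg hrq hf₀ hg₀
    (memLp_ofReal_of_integrable_rpow hf hf₀ hrq.pos hfr)
    (memLp_ofReal_of_integrable_rpow hg hg₀ hrq.symm.pos hgq)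

lemma setIntegral_Ioc_sub_rpow_neg_le {η t₁ t₂ s : ℝ} (hs : 1 < s) (ht₁ : η < t₁)
    (ht₁₂ : t₁ ≤ t₂) :
    ∫ t in Ioc t₁ t₂, (t - η) ^ (-s) ≤ (t₁ - η) ^ (1 - s) / (s - 1) := by
  have h0 : (0 : ℝ) ∉ uIcc (t₁ - η) (t₂ - η) := by
    rw [uIcc_of_le (by linarith)]; exact fun h => by linarith [h.1]
  rw [← intervalIntegral.integral_of_le ht₁₂,
    intervalIntegral.integral_comp_sub_right (fun u => u ^ (-s)),
    integral_rpow (Or.inr ⟨by linarith, h0⟩), show -s + 1 = -(s - 1) by ring, div_neg, ← neg_div, neg_sub,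
    show 1 - s = -(s - 1) by ring]
  gcongr
  exact sub_le_self _ (Real.rpow_nonneg (by linarith) _)

theorem setIntegral_Ioc_sub_rpow_mul_rpow_le {a p η t₁ t₂ : ℝ} {h : ℝ → ℝ} (hp : 0 < p)
    (hdecay : 1 < a * (p - 1) / 2) (ht₁ : η < t₁) (ht₁₂ : t₁ ≤ t₂) (hmeas : Measurable h)
    (h₀ : ∀ t, 0 ≤ h t) (hint : IntegrableOn (fun t => (t - η) ^ a * h t ^ (p + 1)) (Ioi η)) :
    ∫ t in Ioc t₁ t₂, (t - η) ^ (a / 2) * h t ^ p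
      ≤ (∫ t in Ioi η, (t - η) ^ a * h t ^ (p + 1)) ^ (p / (p + 1))
        * ((t₁ - η) ^ (1 - a * (p - 1) / 2) / (a * (p - 1) / 2 - 1)) ^ (1 / (p + 1)) := by
  set s := a * (p - 1) / 2
  set F : ℝ → ℝ := fun t => (t - η) ^ (a * p / (p + 1)) * h t ^ p
  set G : ℝ → ℝ := fun t => (t - η) ^ (-(s / (p + 1)))
  have hsub : Ioc t₁ t₂ ⊆ Ioi η := fun t ht => ht₁.trans ht.1
  have hpos : ∀ t ∈ Ioc t₁ t₂, 0 < t - η := fun t ht => sub_pos.2 (hsub ht)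
  have hconj : ((p + 1) / p).HolderConjugate (p + 1) :=
    (Real.holderConjugate_iff).2 ⟨by rw [lt_div_iff₀ hp]; linarith, by field_simp⟩
  have hsplit : ∀ t ∈ Ioc t₁ t₂, (t - η) ^ (a / 2) * h t ^ p = F t * G t := by
    intro t ht
    rw [mul_right_comm, ← Real.rpow_add (hpos t ht)]
    congr 2
    field_simp
    ring
  have hF : ∀ t ∈ Ioc t₁ t₂, F t ^ ((p + 1) / p) = (t - η) ^ a * h t ^ (p + 1) := by
    intro t ht
    rw [Real.mul_rpow (Real.rpow_nonneg (hpos t ht).le _) (Real.rpow_nonneg (h₀ t) _),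
      ← Real.rpow_mul (hpos t ht).le, ← Real.rpow_mul (h₀ t)]
    congr 2 <;> field_simp
  have hG : ∀ t ∈ Ioc t₁ t₂, G t ^ (p + 1) = (t - η) ^ (-s) := by
    intro t ht
    rw [← Real.rpow_mul (hpos t ht).le]
    congr 1
    field_simp
  have htail : IntegrableOn (fun t => (t - η) ^ (-s)) (Ioc t₁ t₂) := by
    refine (ContinuousOn.integrableOn_Icc ?_).mono_set Ioc_subset_Icc_self
    exact ContinuousOn.rpow_const (by fun_prop)
      (fun t ht => Or.inl (sub_pos.2 (ht₁.trans_le ht.1)).ne')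
  have hF₀ : ∀ t ∈ Ioc t₁ t₂, 0 ≤ F t := fun t ht =>
    mul_nonneg (Real.rpow_nonneg (hpos t ht).le _) (Real.rpow_nonneg (h₀ t) _)
  have hG₀ : ∀ t ∈ Ioc t₁ t₂, 0 ≤ G t := fun t ht => Real.rpow_nonneg (hpos t ht).le _
  have hFG := integral_mul_le_of_integrable_rpow (μ := volume.restrict (Ioc t₁ t₂)) hconj
    (f := F) (g := G) (by fun_prop) (by fun_prop)
    ((ae_restrict_iff' measurableSet_Ioc).2 (Eventually.of_forall hF₀))
    ((ae_restrict_iff' measurableSet_Ioc).2 (Eventually.of_forall hG₀))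
    ((hint.mono_set hsub).congr_fun (fun t ht => (hF t ht).symm) measurableSet_Ioc)
    (htail.congr_fun (fun t ht => (hG t ht).symm) measurableSet_Ioc)
  have hFbound : ∫ t in Ioc t₁ t₂, F t ^ ((p + 1) / p)
      ≤ ∫ t in Ioi η, (t - η) ^ a * h t ^ (p + 1) := by
    rw [setIntegral_congr_fun measurableSet_Ioc hF]
    refine setIntegral_mono_set hint ?_ hsub.eventuallyLE
    refine (ae_restrict_iff' measurableSet_Ioi).2 (Eventually.of_forall fun t ht => ?_)
    exact mul_nonneg (Real.rpow_nonneg (sub_pos.2 ht).le _) (Real.rpow_nonneg (h₀ t) _)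
  have hGbound : ∫ t in Ioc t₁ t₂, G t ^ (p + 1) ≤ (t₁ - η) ^ (1 - s) / (s - 1) := by
    rw [setIntegral_congr_fun measurableSet_Ioc hG]
    exact setIntegral_Ioc_sub_rpow_neg_le hdecay ht₁ ht₁₂
  have hFint₀ : 0 ≤ ∫ t in Ioc t₁ t₂, F t ^ ((p + 1) / p) :=
    setIntegral_nonneg measurableSet_Ioc fun t ht => Real.rpow_nonneg (hF₀ t ht) _
  have hGint₀ : 0 ≤ ∫ t in Ioc t₁ t₂, G t ^ (p + 1) :=
    setIntegral_nonneg measurableSet_Ioc fun t ht => Real.rpow_nonneg (hG₀ t ht) _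
  rw [setIntegral_congr_fun measurableSet_Ioc hsplit, ← one_div_div (p + 1) p]
  refine hFG.trans ?_
  gcongr
  exact Real.rpow_nonneg (hFint₀.trans hFbound) _

/-- Hölder estimate along characteristic lines: for `d ≥ 3`, `p > 1 + 2/(d−1)`, if
`∫_η^∞ (t−η)^{d−1} h(t)^{p+1} dt ≤ E` then for `t₂ > t₁ > η`,
`∫_{t₁}^{t₂} (t−η)^{(d−1)/2} h(t)^p dt ≤ C(d,p) E^{p/(p+1)} (t₁−η)^{−β/2}` with
`β = ((d−1)(p−1)−2)/(p+1) > 0`. -/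
theorem stmt11 (d : ℕ) (hd : 3 ≤ d) (p : ℝ) (hp : 1 + 2 / ((d:ℝ) - 1) < p) :
    ∃ C : ℝ, 0 < C ∧ ∀ (η t₁ E : ℝ) (h : ℝ → ℝ), η < t₁ → 0 ≤ E →
      Measurable h → (∀ t, 0 ≤ h t) →
      IntegrableOn (fun t => (t - η) ^ ((d:ℝ) - 1) * (h t) ^ (p + 1)) (Ioi η) →
      (∫ t in Ioi η, (t - η) ^ ((d:ℝ) - 1) * (h t) ^ (p + 1)) ≤ E →
      ∀ t₂, t₁ < t₂ →
        (∫ t in Ioc t₁ t₂, (t - η) ^ (((d:ℝ) - 1) / 2) * (h t) ^ p)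
          ≤ C * E ^ (p / (p + 1))
            * (t₁ - η) ^ (-((((d:ℝ) - 1) * (p - 1) - 2) / (p + 1)) / 2) := by
  have ha : 2 ≤ (d : ℝ) - 1 := by
    have : (3 : ℝ) ≤ d := by exact_mod_cast hd
    linarith
  have hdecay : 1 < ((d : ℝ) - 1) * (p - 1) / 2 := by
    have := (div_lt_iff₀ (by linarith : (0 : ℝ) < (d : ℝ) - 1)).1 (lt_sub_iff_add_lt'.2 hp)
    linarith
  have hp₀ : 0 < p := by
    have : 0 < 2 / ((d : ℝ) - 1) := by positivity
    linarith
  set s := ((d : ℝ) - 1) * (p - 1) / 2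
  refine ⟨((s - 1) ^ (1 / (p + 1)))⁻¹, inv_pos.2 (Real.rpow_pos_of_pos (by linarith) _), ?_⟩
  intro η t₁ E h ht₁ _ hmeas h₀ hint hIE t₂ ht₁₂
  have hK : 0 < t₁ - η := sub_pos.2 ht₁
  have htail : ((t₁ - η) ^ (1 - s) / (s - 1)) ^ (1 / (p + 1))
      = ((s - 1) ^ (1 / (p + 1)))⁻¹
        * (t₁ - η) ^ (-((((d:ℝ) - 1) * (p - 1) - 2) / (p + 1)) / 2) := by
    rw [Real.div_rpow (Real.rpow_nonneg hK.le _) (by linarith), ← Real.rpow_mul hK.le,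
      div_eq_inv_mul]
    congr 2
    field_simp
    ring
  have hI₀ : 0 ≤ ∫ t in Ioi η, (t - η) ^ ((d:ℝ) - 1) * (h t) ^ (p + 1) :=
    setIntegral_nonneg measurableSet_Ioi fun t ht =>
      mul_nonneg (Real.rpow_nonneg (sub_pos.2 ht).le _) (Real.rpow_nonneg (h₀ t) _)
  calc _ ≤ _ := setIntegral_Ioc_sub_rpow_mul_rpow_le hp₀ hdecay ht₁ ht₁₂.le hmeas h₀ hint
    _ ≤ E ^ (p / (p + 1)) * ((t₁ - η) ^ (1 - s) / (s - 1)) ^ (1 / (p + 1)) := by gcongr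
    _ = _ := by rw [htail]; ring
end
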